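/- (Temporal L¹ modulus of continuity.) Let (x^i)_{i=1}^N, (v^i)_{i=1}^{N−1} be a solution of the particle system on (0, t'). Then for all s, t ∈ [0, t'): ∫_ℝ |v(x, t) − v(x, s)| dx ≤ 4 [f]_Lip (Σ_{i=0}^{N−1} |v₀^{i+1} − v₀^i|) |t − s|, where [f]_Lip denotes the Lipschitz constant of f. -/

import Mathlib

open MeasureTheory Set Filter
open scoped ENNReal NNReal

/-- The velocity field `a(v) = f(v)/v`, extended by `a(0) = f'(0)`. -/
noncomputable def aF (f : ℝ → ℝ) (v : ℝ) : ℝ :=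
  if v = 0 then deriv f 0 else f v / v

/-- The particle velocity `V(v_l, v_r)`: the minimum of `a` over `[v_l, v_r]` if
`v_l ≤ v_r`, and the maximum of `a` over `[v_r, v_l]` if `v_r ≤ v_l`. -/
noncomputable def pV (f : ℝ → ℝ) (vl vr : ℝ) : ℝ :=
  if vl ≤ vr then sInf (aF f '' Set.Icc vl vr) else sSup (aF f '' Set.Icc vr vl)

/-- A solution of the particle system `ẋ^i = V(v^{i-1}, v^i)`,
`v^i_t = v₀^i Δx₀^i / Δx^i_t` on the time interval `[0, t')`, with the conventions
`v⁰ ≡ 0`, `v^N ≡ 0`. -/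
structure IsParticleSol (f : ℝ → ℝ) (N : ℕ) (x₀ v₀ : ℕ → ℝ) (t' : ℝ)
    (x v : ℕ → ℝ → ℝ) : Prop where
  init : ∀ i, 1 ≤ i → i ≤ N → x i 0 = x₀ i
  cont : ∀ i, 1 ≤ i → i ≤ N → ContinuousOn (x i) (Set.Ico 0 t')
  order : ∀ t ∈ Set.Ioo (0:ℝ) t', ∀ i, 1 ≤ i → i < N → x i t < x (i+1) t
  vzero : ∀ t, v 0 t = 0
  vN : ∀ t, v N t = 0
  ode : ∀ i, 1 ≤ i → i ≤ N → ∀ t ∈ Set.Ioo (0:ℝ) t',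
    HasDerivAt (x i) (pV f (v (i-1) t) (v i t)) t
  mass : ∀ i, 1 ≤ i → i < N → ∀ t ∈ Set.Ico (0:ℝ) t',
    v i t = v₀ i * (x₀ (i+1) - x₀ i) / (x (i+1) t - x i t)


/-!
At each time the approximate solution is, up to a null set, the step function with jumps
`v (i + 1) - v i` at the particles `x (i + 1)`. Comparing two such step functions shows that the
right `L¹` speed of `t ↦ v(·, t)` is at most `∑ |Δv| |V| + ∑ v |ΔV|`: the jumps move with the
particle velocities `V`, and by mass conservation `v (x (i + 1) - x i) = const` the value in a cell
changes at rate `v |ΔV|` per unit length. Each `V` equals `a(ξ)` for some `ξ` between the two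
states next to the particle, so `|a| ≤ K` and `a(ξ) ξ = f(ξ)` bound this speed by `3K` times the
total variation. The total variation does not increase in time (at a local maximum of `v` the cell
expands, at a local minimum it shrinks), hence `t ↦ v(·, t)` is `3K TV(v₀)`-Lipschitz in `L¹`.
-/

open scoped Topology

section Velocity

variable {f : ℝ → ℝ} {K : ℝ≥0}

theorem abs_aF_le (hf : LipschitzWith K f) (hf0 : f 0 = 0) (z : ℝ) : |aF f z| ≤ K := by
  rcases eq_or_ne z 0 with rfl | hz
  · simpa [aF] using norm_deriv_le_of_lipschitz (x₀ := 0) hf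
  · rw [aF, if_neg hz, abs_div, div_le_iff₀ (abs_pos.2 hz)]
    simpa [Real.dist_eq, hf0] using hf.dist_le_mul z 0

theorem aF_mul_self (hf0 : f 0 = 0) (z : ℝ) : aF f z * z = f z := by
  rcases eq_or_ne z 0 with rfl | hz
  · simp [hf0]
  · rw [aF, if_neg hz, div_mul_cancel₀ _ hz]

theorem aF_eq_update_slope (hf0 : f 0 = 0) :
    aF f = Function.update (slope f 0) 0 (deriv f 0) := by
  ext z
  rcases eq_or_ne z 0 with rfl | hz
  · simp [aF]
  · simp [aF, hz, slope_def_field, hf0]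

theorem continuous_aF (hf : Continuous f) (hf0 : f 0 = 0) (hfd : DifferentiableAt ℝ f 0) :
    Continuous (aF f) := by
  rw [continuous_iff_continuousAt]
  intro z
  rcases eq_or_ne z 0 with rfl | hz
  · rw [aF_eq_update_slope hf0, continuousAt_update_same]
    exact hasDerivAt_iff_tendsto_slope.1 hfd.hasDerivAt
  · have : ContinuousAt (fun v => f v / v) z := hf.continuousAt.div continuousAt_id hz
    refine this.congr (Filter.eventuallyEq_of_mem (isOpen_ne.mem_nhds hz) fun y hy => ?_)
    rw [aF, if_neg hy]

theorem pV_of_le {u w : ℝ} (h : u ≤ w) : pV f u w = sInf (aF f '' Icc u w) := if_pos h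

theorem pV_of_ge {u w : ℝ} (h : w ≤ u) : pV f u w = sSup (aF f '' Icc w u) := by
  rcases h.eq_or_lt with rfl | hlt
  · simp [pV]
  · exact if_neg hlt.not_ge

theorem pV_mem_image (hcont : Continuous (aF f)) (u w : ℝ) : pV f u w ∈ aF f '' uIcc u w := by
  rcases le_total u w with h | h
  · rw [pV_of_le h, uIcc_of_le h]
    exact (isCompact_Icc.image hcont).sInf_mem ((nonempty_Icc.2 h).image _)
  · rw [pV_of_ge h, uIcc_of_ge h]
    exact (isCompact_Icc.image hcont).sSup_mem ((nonempty_Icc.2 h).image _)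

theorem pV_le_pV_of_le_of_ge (hcont : Continuous (aF f)) {u w w' : ℝ} (h₁ : u ≤ w)
    (h₂ : w' ≤ w) : pV f u w ≤ pV f w w' := by
  rw [pV_of_le h₁, pV_of_ge h₂]
  exact (csInf_le (isCompact_Icc.image hcont).bddBelow ⟨w, right_mem_Icc.2 h₁, rfl⟩).trans
    (le_csSup (isCompact_Icc.image hcont).bddAbove ⟨w, right_mem_Icc.2 h₂, rfl⟩)

theorem pV_le_pV_of_ge_of_le (hcont : Continuous (aF f)) {u w w' : ℝ} (h₁ : w ≤ u)
    (h₂ : w ≤ w') : pV f w w' ≤ pV f u w := by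
  rw [pV_of_le h₂, pV_of_ge h₁]
  exact (csInf_le (isCompact_Icc.image hcont).bddBelow ⟨w, left_mem_Icc.2 h₂, rfl⟩).trans
    (le_csSup (isCompact_Icc.image hcont).bddAbove ⟨w, left_mem_Icc.2 h₁, rfl⟩)

theorem abs_aF_mul_sub_le (hf : LipschitzWith K f) (hf0 : f 0 = 0) (ξ u : ℝ) :
    |aF f ξ * u - f u| ≤ 2 * K * |u - ξ| := by
  have hlip : |f ξ - f u| ≤ K * |u - ξ| := by
    simpa [Real.dist_eq, abs_sub_comm] using hf.dist_le_mul ξ u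
  calc |aF f ξ * u - f u| = |aF f ξ * (u - ξ) + (f ξ - f u)| := by
        rw [← aF_mul_self hf0 ξ]; ring_nf
    _ ≤ |aF f ξ| * |u - ξ| + K * |u - ξ| := by
        rw [← abs_mul]; exact (abs_add_le _ _).trans (add_le_add_right hlip _)
    _ ≤ K * |u - ξ| + K * |u - ξ| := by gcongr; exact abs_aF_le hf hf0 ξ
    _ = 2 * K * |u - ξ| := by ring

/-- Writing `V = a(ξ)` with `ξ` between `u` and `w`, each flux defect `|u V - f u|` costs
`2K|u - ξ|`, and `|u - ξ| + |w - ξ| = |w - u|`. -/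
theorem abs_sub_mul_abs_pV_add_flux_le (hf : LipschitzWith K f) (hf0 : f 0 = 0)
    (hcont : Continuous (aF f)) (u w : ℝ) :
    |w - u| * |pV f u w| + |u * pV f u w - f u| + |w * pV f u w - f w| ≤ 3 * K * |w - u| := by
  obtain ⟨ξ, hξ, hV⟩ := pV_mem_image hcont u w
  rw [← hV, mul_comm u, mul_comm w]
  have hsplit : |u - ξ| + |w - ξ| = |w - u| := by
    rcases Set.mem_uIcc.1 hξ with ⟨h₁, h₂⟩ | ⟨h₁, h₂⟩
    · rw [abs_of_nonpos (by linarith), abs_of_nonneg (by linarith),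
        abs_of_nonneg (by linarith : 0 ≤ w - u)]; ring
    · rw [abs_of_nonneg (by linarith), abs_of_nonpos (by linarith),
        abs_of_nonpos (by linarith : w - u ≤ 0)]; ring
  have h₀ : |w - u| * |aF f ξ| ≤ |w - u| * K := by gcongr; exact abs_aF_le hf hf0 ξ
  have h₂ : 2 * K * |u - ξ| + 2 * K * |w - ξ| = 2 * K * |w - u| := by rw [← hsplit]; ring
  linarith [abs_aF_mul_sub_le hf hf0 ξ u, abs_aF_mul_sub_le hf hf0 ξ w]

theorem sign_sub_mul_pV_sub_pV_nonneg (hcont : Continuous (aF f))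
    {a b c ε ε' : ℝ} (hε : ε = 1 ∧ a ≤ b ∨ ε = -1 ∧ b ≤ a)
    (hε' : ε' = 1 ∧ b ≤ c ∨ ε' = -1 ∧ c ≤ b) : 0 ≤ (ε - ε') * (pV f b c - pV f a b) := by
  rcases hε with ⟨rfl, hab⟩ | ⟨rfl, hba⟩ <;> rcases hε' with ⟨rfl, hbc⟩ | ⟨rfl, hcb⟩
  · simp
  · nlinarith [pV_le_pV_of_le_of_ge hcont hab hcb]
  · nlinarith [pV_le_pV_of_ge_of_le hcont hba hbc]
  · simp

end Velocity

theorem sum_range_succ_eq_sum_range (g : ℕ → ℝ) {N : ℕ} (h : g 0 = g N) :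
    ∑ i ∈ Finset.range N, g (i + 1) = ∑ i ∈ Finset.range N, g i := by
  have h₁ := Finset.sum_range_succ' g N
  have h₂ := Finset.sum_range_succ g N
  linarith

theorem sum_range_mul_sub_eq (a b : ℕ → ℝ) {N : ℕ} (h0 : b 0 = 0) (hN : b N = 0) :
    ∑ i ∈ Finset.range N, a i * (b (i + 1) - b i)
      = ∑ i ∈ Finset.range N, (a i - a (i + 1)) * b (i + 1) := by
  have := sum_range_succ_eq_sum_range (fun i => a i * b i) (N := N) (by simp [h0, hN])
  simp only [mul_sub, sub_mul, Finset.sum_sub_distrib] at this ⊢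
  linarith

theorem sum_l1_rate_le {f : ℝ → ℝ} {K : ℝ≥0} (hf : LipschitzWith K f) (hf0 : f 0 = 0)
    (hcont : Continuous (aF f)) (u : ℕ → ℝ) {N : ℕ} (hu : ∀ i ≤ N, 0 ≤ u i) (h0 : u 0 = 0)
    (hN : u N = 0) :
    ∑ i ∈ Finset.range N, (|u (i + 1) - u i| * |pV f (u i) (u (i + 1))|
        + u (i + 1) * |pV f (u (i + 1)) (u (i + 2)) - pV f (u i) (u (i + 1))|)
      ≤ 3 * K * ∑ i ∈ Finset.range N, |u (i + 1) - u i| := by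
  set P : ℕ → ℝ := fun i => pV f (u i) (u (i + 1))
  set g : ℕ → ℝ := fun i => |u i * P i - f (u i)|
  have hshift : ∑ i ∈ Finset.range N, g (i + 1) = ∑ i ∈ Finset.range N, g i :=
    sum_range_succ_eq_sum_range g (by simp [g, h0, hN])
  have hsplit : ∀ i ∈ Finset.range N, u (i + 1) * |P (i + 1) - P i|
      ≤ g (i + 1) + |u (i + 1) * P i - f (u (i + 1))| := by
    intro i hi
    calc u (i + 1) * |P (i + 1) - P i|
        = |(u (i + 1) * P (i + 1) - f (u (i + 1))) - (u (i + 1) * P i - f (u (i + 1)))| := by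
          rw [← abs_of_nonneg (hu (i + 1) (Finset.mem_range.1 hi)), ← abs_mul,
            abs_of_nonneg (hu (i + 1) (Finset.mem_range.1 hi))]
          ring_nf
      _ ≤ _ := abs_sub _ _
  have hflux : ∀ i ∈ Finset.range N, |u (i + 1) - u i| * |P i| + g i
      + |u (i + 1) * P i - f (u (i + 1))| ≤ 3 * K * |u (i + 1) - u i| :=
    fun i _ => abs_sub_mul_abs_pV_add_flux_le hf hf0 hcont (u i) (u (i + 1))
  calc _ ≤ ∑ i ∈ Finset.range N, (|u (i + 1) - u i| * |P i|
          + (g (i + 1) + |u (i + 1) * P i - f (u (i + 1))|)) :=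
        Finset.sum_le_sum fun i hi => add_le_add_right (hsplit i hi) _
    _ = ∑ i ∈ Finset.range N, (|u (i + 1) - u i| * |P i| + g i
          + |u (i + 1) * P i - f (u (i + 1))|) := by
        simp only [Finset.sum_add_distrib, hshift]; ring
    _ ≤ _ := by rw [Finset.mul_sum]; exact Finset.sum_le_sum hflux

/-- Summation by parts leaves the terms `(ε i - ε (i + 1)) * d (i + 1)`, which vanish unless
`u (i + 1)` is a local extremum; there the cell expands at a maximum and shrinks at a minimum. -/
theorem sum_sign_mul_sub_nonpos {f : ℝ → ℝ} (hcont : Continuous (aF f)) (u ℓ ε : ℕ → ℝ) {N : ℕ}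
    (hu : ∀ i ≤ N, 0 ≤ u i) (h0 : u 0 = 0) (hN : u N = 0) (hℓ : ∀ i, 1 ≤ i → i < N → 0 < ℓ i)
    (hε : ∀ i < N, ε i = 1 ∧ u i ≤ u (i + 1) ∨ ε i = -1 ∧ u (i + 1) ≤ u i) :
    let d : ℕ → ℝ := fun i => -u i * (pV f (u i) (u (i + 1)) - pV f (u (i - 1)) (u i)) / ℓ i
    ∑ i ∈ Finset.range N, ε i * (d (i + 1) - d i) ≤ 0 := by
  intro d
  rw [sum_range_mul_sub_eq ε d (by simp [d, h0]) (by simp [d, hN])]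
  refine Finset.sum_nonpos fun i hi => ?_
  rcases Nat.lt_or_eq_of_le (Finset.mem_range.1 hi) with hi | rfl
  · have := sign_sub_mul_pV_sub_pV_nonneg hcont (hε i (by omega)) (hε (i + 1) hi)
    simp only [d, Nat.add_sub_cancel]
    rw [show ∀ e b X ℓ : ℝ, e * (-b * X / ℓ) = -(b / ℓ * (e * X)) by intros; ring]
    exact neg_nonpos.2 (mul_nonneg (div_nonneg (hu _ hi.le) (hℓ _ (by omega) hi).le) this)
  · simp [d, hN]

section StepFunction

noncomputable def stepFun (N : ℕ) (x u : ℕ → ℝ) (y : ℝ) : ℝ :=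
  ∑ i ∈ Finset.range N, (u (i + 1) - u i) * (Ioi (x (i + 1))).indicator 1 y

theorem abs_indicator_Ioi_sub_indicator_Ioi (a b y : ℝ) :
    |(Ioi a).indicator (1 : ℝ → ℝ) y - (Ioi b).indicator 1 y| = (uIoc a b).indicator 1 y := by
  wlog h : a ≤ b generalizing a b
  · rw [abs_sub_comm, uIoc_comm]; exact this b a (le_of_not_ge h)
  rw [uIoc_of_le h, ← Ioi_sdiff_Ioi, indicator_sdiff (Ioi_subset_Ioi h), Pi.sub_apply,
    abs_of_nonneg]
  exact sub_nonneg.2 (indicator_le_indicator_of_subset (Ioi_subset_Ioi h) (fun _ => zero_le_one) y)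

theorem integrable_indicator_Ioi_sub_indicator_Ioi (a b : ℝ) :
    Integrable (fun y => (Ioi a).indicator (1 : ℝ → ℝ) y - (Ioi b).indicator 1 y) := by
  have hI : Integrable ((uIoc a b).indicator (1 : ℝ → ℝ)) :=
    (integrable_indicator_iff measurableSet_uIoc).2
      (integrableOn_const (C := (1 : ℝ)) (by simp [Real.volume_uIoc]))
  refine Integrable.mono' hI (((measurable_one.indicator measurableSet_Ioi).sub
      (measurable_one.indicator measurableSet_Ioi)).aestronglyMeasurable) (ae_of_all _ fun y => ?_)
  rw [Real.norm_eq_abs, abs_indicator_Ioi_sub_indicator_Ioi]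

theorem integral_abs_indicator_Ioi_sub_indicator_Ioi (a b : ℝ) :
    ∫ y, |(Ioi a).indicator (1 : ℝ → ℝ) y - (Ioi b).indicator 1 y| = |a - b| := by
  simp_rw [abs_indicator_Ioi_sub_indicator_Ioi]
  rw [integral_indicator_one measurableSet_uIoc]
  simp [measureReal_def, Real.volume_uIoc, abs_sub_comm]

theorem stepFun_eq_sum_cells {N : ℕ} (x u : ℕ → ℝ) (h0 : u 0 = 0) (hN : u N = 0) (y : ℝ) :
    stepFun N x u y = ∑ i ∈ Finset.range N,
      u (i + 1) * ((Ioi (x (i + 1))).indicator 1 y - (Ioi (x (i + 2))).indicator 1 y) := by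
  rw [stepFun]
  simp_rw [mul_comm (u _ - u _)]
  rw [sum_range_mul_sub_eq _ u h0 hN]
  simp_rw [mul_comm _ (u _)]

theorem integrable_stepFun {N : ℕ} (x u : ℕ → ℝ) (h0 : u 0 = 0) (hN : u N = 0) :
    Integrable (stepFun N x u) := by
  rw [funext (stepFun_eq_sum_cells x u h0 hN)]
  exact integrable_finsetSum _ fun i _ =>
    (integrable_indicator_Ioi_sub_indicator_Ioi _ _).const_mul _

/-- Moving the jumps from `x` to `x'` with the new heights costs `|Δu'| |x' - x|` each; what is
left is the step function of `u' - u` on the old cells. -/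
theorem integral_abs_stepFun_sub_le {N : ℕ} (x x' u u' : ℕ → ℝ) (h0 : u' 0 = u 0)
    (hN : u' N = u N) :
    ∫ y, |stepFun N x' u' y - stepFun N x u y| ≤
      ∑ i ∈ Finset.range N, |u' (i + 1) - u' i| * |x' (i + 1) - x (i + 1)|
        + ∑ i ∈ Finset.range N, |u' (i + 1) - u (i + 1)| * |x (i + 1) - x (i + 2)| := by
  set H : ℝ → ℝ → ℝ := fun a y => (Ioi a).indicator 1 y
  have hpt : ∀ y, stepFun N x' u' y - stepFun N x u y =
      ∑ i ∈ Finset.range N, (u' (i + 1) - u' i) * (H (x' (i + 1)) y - H (x (i + 1)) y)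
        + ∑ i ∈ Finset.range N, (u' (i + 1) - u (i + 1)) * (H (x (i + 1)) y - H (x (i + 2)) y) := by
    intro y
    have hδ := stepFun_eq_sum_cells (N := N) x (u' - u) (by simp [h0]) (by simp [hN]) y
    simp only [stepFun, Pi.sub_apply] at hδ
    simp only [stepFun, H, ← hδ, ← Finset.sum_sub_distrib, ← Finset.sum_add_distrib]
    exact Finset.sum_congr rfl fun i _ => by ring
  set g : ℝ → ℝ := fun y =>
    ∑ i ∈ Finset.range N, |u' (i + 1) - u' i| * |H (x' (i + 1)) y - H (x (i + 1)) y|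
      + ∑ i ∈ Finset.range N, |u' (i + 1) - u (i + 1)| * |H (x (i + 1)) y - H (x (i + 2)) y|
  have hle : ∀ y, |stepFun N x' u' y - stepFun N x u y| ≤ g y := by
    intro y
    rw [hpt]
    refine (abs_add_le _ _).trans (add_le_add ?_ ?_) <;>
      exact (Finset.abs_sum_le_sum_abs _ _).trans_eq (by simp_rw [abs_mul])
  have hint : ∀ (c : ℕ → ℝ) (a b : ℕ → ℝ), ∀ i ∈ Finset.range N,
      Integrable fun y => c i * |H (a i) y - H (b i) y| :=
    fun c a b i _ => (integrable_indicator_Ioi_sub_indicator_Ioi _ _).abs.const_mul _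
  calc _ ≤ ∫ y, g y := integral_mono_of_nonneg (ae_of_all _ fun _ => abs_nonneg _)
        ((integrable_finsetSum _ (hint _ _ _)).add (integrable_finsetSum _ (hint _ _ _)))
        (ae_of_all _ hle)
    _ = _ := by
      rw [integral_add (integrable_finsetSum _ (hint _ _ _)) (integrable_finsetSum _ (hint _ _ _)),
        integral_finsetSum _ (hint _ _ _), integral_finsetSum _ (hint _ _ _)]
      simp only [integral_const_mul, H, integral_abs_indicator_Ioi_sub_indicator_Ioi]

theorem exists_cell (x : ℕ → ℝ) {y : ℝ} :
    ∀ N : ℕ, (∀ k, 1 ≤ k → k ≤ N → x k ≠ y) →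
      ∃ j ≤ N, (1 ≤ j → x j < y) ∧ (j < N → y < x (j + 1))
  | 0, _ => ⟨0, le_rfl, by omega, by omega⟩
  | N + 1, hy => by
    obtain ⟨j, hjN, hl, hr⟩ := exists_cell x N fun k h₁ h₂ => hy k h₁ (by omega)
    rcases hjN.lt_or_eq with hjN | rfl
    · exact ⟨j, by omega, hl, fun _ => hr hjN⟩
    rcases (hy (j + 1) (by omega) le_rfl).lt_or_gt with hlt | hgt
    · exact ⟨j + 1, le_rfl, fun _ => hlt, by omega⟩
    · exact ⟨j, by omega, hl, fun _ => hgt⟩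

theorem stepFun_eq_of_mem_cell {N j : ℕ} {x : ℕ → ℝ} (hx : MonotoneOn x (Icc 1 N))
    (u : ℕ → ℝ) (h0 : u 0 = 0) {y : ℝ} (hjN : j ≤ N) (hl : 1 ≤ j → x j < y)
    (hr : j < N → y < x (j + 1)) : stepFun N x u y = u j := by
  have hleft : ∀ i < j, (Ioi (x (i + 1))).indicator (1 : ℝ → ℝ) y = 1 := fun i hi =>
    indicator_of_mem (mem_Ioi.2 ((hx ⟨by omega, by omega⟩ ⟨by omega, hjN⟩ hi).trans_lt
      (hl (by omega)))) _
  have hright : ∀ i, j ≤ i → i < N → (Ioi (x (i + 1))).indicator (1 : ℝ → ℝ) y = 0 :=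
    fun i hji hiN => indicator_of_notMem (not_lt.2 ((hr (by omega)).le.trans
      (hx ⟨by omega, by omega⟩ ⟨by omega, by omega⟩ (by omega)))) _
  have hsum : ∑ i ∈ Finset.range j, (u (i + 1) - u i) * (Ioi (x (i + 1))).indicator 1 y
      = ∑ i ∈ Finset.range j, (u (i + 1) - u i) :=
    Finset.sum_congr rfl fun i hi => by rw [hleft i (Finset.mem_range.1 hi), mul_one]
  have hzero : ∑ i ∈ Finset.Ico j N, (u (i + 1) - u i) * (Ioi (x (i + 1))).indicator 1 y = 0 :=
    Finset.sum_eq_zero fun i hi => by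
      rw [hright i (Finset.mem_Ico.1 hi).1 (Finset.mem_Ico.1 hi).2, mul_zero]
  rw [stepFun, ← Finset.sum_range_add_sum_Ico _ hjN, hsum, hzero, Finset.sum_range_sub, h0,
    add_zero, sub_zero]

end StepFunction

section Dini

theorem le_add_mul_of_frequently_slope_lt {g : ℝ → ℝ} {a b C : ℝ} (hab : a ≤ b)
    (hg : ContinuousOn g (Icc a b))
    (hslope : ∀ χ ∈ Ioo a b, ∀ r, C < r → ∃ᶠ z in 𝓝[>] χ, slope g χ z < r) :
    g b ≤ g a + C * (b - a) := by
  have hfrom : ∀ a' ∈ Ioc a b, g b ≤ g a' + C * (b - a') := fun a' ha' =>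
    image_le_of_liminf_slope_right_le_deriv_boundary (hg.mono (Icc_subset_Icc ha'.1.le le_rfl))
      (B := fun z => g a' + C * (z - a')) (B' := fun _ => C) (by simp) (by fun_prop)
      (fun z _ => by
        simpa using (((hasDerivAt_id z).sub_const a').const_mul C).const_add (g a')
          |>.hasDerivWithinAt (s := Ici z))
      (fun z hz => hslope z ⟨ha'.1.trans_le hz.1, hz.2⟩) (right_mem_Icc.2 ha'.2)
  rcases hab.eq_or_lt with rfl | hlt
  · simp
  have hlim : Tendsto (fun a' => g a' + C * (b - a')) (𝓝[>] a) (𝓝 (g a + C * (b - a))) := by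
    rw [← nhdsWithin_Ioc_eq_nhdsGT hlt]
    exact (((hg a (left_mem_Icc.2 hab)).mono Ioc_subset_Icc_self).add
      (continuousWithinAt_const.mul (continuousWithinAt_const.sub continuousWithinAt_id))).tendsto
  exact ge_of_tendsto hlim (Filter.mem_of_superset (Ioc_mem_nhdsGT hlt) hfrom)

theorem dist_le_mul_of_eventually_dist_lt {X : Type*} [PseudoMetricSpace X] {γ : ℝ → X}
    {a b C : ℝ} (hab : a ≤ b) (hγ : ContinuousOn γ (Icc a b))
    (hspeed : ∀ χ ∈ Ioo a b, ∀ r, C < r → ∀ᶠ z in 𝓝[>] χ, dist (γ z) (γ χ) < r * (z - χ)) :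
    dist (γ b) (γ a) ≤ C * (b - a) := by
  have := le_add_mul_of_frequently_slope_lt (g := fun z => dist (γ z) (γ a)) hab
    (continuous_dist.comp_continuousOn (hγ.prodMk continuousOn_const)) fun χ hχ r hr => by
      refine Eventually.frequently (((hspeed χ hχ r hr).and self_mem_nhdsWithin).mono
        fun z ⟨hz, hχz⟩ => ?_)
      have hpos : 0 < z - χ := sub_pos.2 hχz
      rw [slope_def_field, div_lt_iff₀ hpos]
      linarith [dist_triangle (γ z) (γ χ) (γ a)]
  simpa using this

theorem exists_sign_hasDerivWithinAt_abs {h : ℝ → ℝ} {h' χ : ℝ} (hh : HasDerivAt h h' χ) :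
    ∃ ε : ℝ, (ε = 1 ∧ 0 ≤ h χ ∨ ε = -1 ∧ h χ ≤ 0) ∧
      HasDerivWithinAt (fun z => |h z|) (ε * h') (Ici χ) χ := by
  rcases lt_trichotomy (h χ) 0 with hneg | hzero | hpos
  · exact ⟨-1, Or.inr ⟨rfl, hneg.le⟩, ((hasDerivAt_abs_neg hneg).comp χ hh).hasDerivWithinAt⟩
  · have hslope : Tendsto (slope (fun z => |h z|) χ) (𝓝[Ici χ \ {χ}] χ) (𝓝 |h'|) := by
      rw [Ici_sdiff_left]
      refine ((hasDerivAt_iff_tendsto_slope.1 hh).mono_left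
        (nhdsWithin_mono _ fun z hz => ne_of_gt hz)).abs.congr' ?_
      filter_upwards [self_mem_nhdsWithin] with z hz
      rw [slope_def_field, slope_def_field, hzero, abs_zero, sub_zero, sub_zero, abs_div,
        abs_of_pos (sub_pos.2 hz)]
    rcases le_total 0 h' with hd | hd
    · exact ⟨1, Or.inl ⟨rfl, hzero.ge⟩, by
        simpa [abs_of_nonneg hd] using hasDerivWithinAt_iff_tendsto_slope.2 hslope⟩
    · exact ⟨-1, Or.inr ⟨rfl, hzero.le⟩, by
        simpa [abs_of_nonpos hd] using hasDerivWithinAt_iff_tendsto_slope.2 hslope⟩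
  · exact ⟨1, Or.inl ⟨rfl, hpos.le⟩, ((hasDerivAt_abs_pos hpos).comp χ hh).hasDerivWithinAt⟩

end Dini

namespace IsParticleSol

variable {f : ℝ → ℝ} {K : ℝ≥0} {N : ℕ} {x₀ v₀ : ℕ → ℝ} {t' : ℝ} {x v : ℕ → ℝ → ℝ}

theorem lt_succ (hsol : IsParticleSol f N x₀ v₀ t' x v)
    (hx₀ : ∀ i, 1 ≤ i → i < N → x₀ i < x₀ (i + 1)) {σ : ℝ} (hσ : σ ∈ Ico 0 t') {i : ℕ}
    (hi : 1 ≤ i) (hiN : i < N) : x i σ < x (i + 1) σ := by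
  rcases hσ.1.eq_or_lt with rfl | hpos
  · rw [hsol.init i hi hiN.le, hsol.init (i + 1) (by omega) hiN]
    exact hx₀ i hi hiN
  · exact hsol.order σ ⟨hpos, hσ.2⟩ i hi hiN

theorem monotoneOn (hsol : IsParticleSol f N x₀ v₀ t' x v)
    (hx₀ : ∀ i, 1 ≤ i → i < N → x₀ i < x₀ (i + 1)) {σ : ℝ} (hσ : σ ∈ Ico 0 t') :
    MonotoneOn (fun i => x i σ) (Icc 1 N) := by
  intro i hi j hj hij
  induction j, hij using Nat.le_induction with
  | base => exact le_rfl
  | succ j hij ih =>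
    exact (ih ⟨hi.1.trans hij, by have := hj.2; omega⟩).trans
      (hsol.lt_succ hx₀ hσ (hi.1.trans hij) (by have := hj.2; omega)).le

theorem v_nonneg (hsol : IsParticleSol f N x₀ v₀ t' x v)
    (hx₀ : ∀ i, 1 ≤ i → i < N → x₀ i < x₀ (i + 1)) (hv₀nn : ∀ i, 1 ≤ i → i < N → 0 ≤ v₀ i)
    {σ : ℝ} (hσ : σ ∈ Ico 0 t') {i : ℕ} (hiN : i ≤ N) : 0 ≤ v i σ := by
  rcases Nat.eq_zero_or_pos i with rfl | hi
  · rw [hsol.vzero]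
  rcases hiN.eq_or_lt with rfl | hiN
  · rw [hsol.vN]
  rw [hsol.mass i hi hiN σ hσ]
  have := hx₀ i hi hiN
  have := hsol.lt_succ hx₀ hσ hi hiN
  exact div_nonneg (mul_nonneg (hv₀nn i hi hiN) (by linarith)) (by linarith)

theorem v_apply_zero (hsol : IsParticleSol f N x₀ v₀ t' x v)
    (hx₀ : ∀ i, 1 ≤ i → i < N → x₀ i < x₀ (i + 1)) (hv₀0 : v₀ 0 = 0) (hv₀N : v₀ N = 0)
    (ht' : 0 < t') {i : ℕ} (hiN : i ≤ N) : v i 0 = v₀ i := by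
  rcases Nat.eq_zero_or_pos i with rfl | hi
  · rw [hsol.vzero, hv₀0]
  rcases hiN.eq_or_lt with rfl | hiN
  · rw [hsol.vN, hv₀N]
  rw [hsol.mass i hi hiN 0 ⟨le_rfl, ht'⟩, hsol.init (i + 1) (by omega) hiN,
    hsol.init i hi hiN.le, mul_div_cancel_right₀ _ (sub_pos.2 (hx₀ i hi hiN)).ne']

theorem continuousOn_v (hsol : IsParticleSol f N x₀ v₀ t' x v)
    (hx₀ : ∀ i, 1 ≤ i → i < N → x₀ i < x₀ (i + 1)) {i : ℕ} (hiN : i ≤ N) :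
    ContinuousOn (v i) (Ico 0 t') := by
  rcases Nat.eq_zero_or_pos i with rfl | hi
  · simpa [funext hsol.vzero] using continuousOn_const
  rcases hiN.eq_or_lt with rfl | hiN
  · simpa [funext hsol.vN] using continuousOn_const
  refine ContinuousOn.congr ?_ fun σ hσ => hsol.mass i hi hiN σ hσ
  exact continuousOn_const.div ((hsol.cont (i + 1) (by omega) hiN).sub (hsol.cont i hi hiN.le))
    fun σ hσ => (sub_pos.2 (hsol.lt_succ hx₀ hσ hi hiN)).ne'

/-- From mass conservation `v i * (x (i + 1) - x i) = const`. For `i = 0` and `i = N`, where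
`v i ≡ 0`, the formula vanishes whatever `0 - 1` and `x (N + 1)` are. -/
theorem hasDerivAt_v (hsol : IsParticleSol f N x₀ v₀ t' x v)
    (hx₀ : ∀ i, 1 ≤ i → i < N → x₀ i < x₀ (i + 1)) {χ : ℝ} (hχ : χ ∈ Ioo 0 t') {i : ℕ}
    (hiN : i ≤ N) :
    HasDerivAt (v i) (-v i χ * (pV f (v i χ) (v (i + 1) χ) - pV f (v (i - 1) χ) (v i χ))
      / (x (i + 1) χ - x i χ)) χ := by
  rcases Nat.eq_zero_or_pos i with rfl | hi
  · simpa [funext hsol.vzero] using hasDerivAt_const χ (0 : ℝ)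
  rcases hiN.eq_or_lt with rfl | hiN
  · simpa [funext hsol.vN] using hasDerivAt_const χ (0 : ℝ)
  have hχ' : χ ∈ Ico 0 t' := Ioo_subset_Ico_self hχ
  have hℓ := sub_pos.2 (hsol.lt_succ hx₀ hχ' hi hiN)
  have hxi := hsol.ode i hi hiN.le χ hχ
  have hxi' := hsol.ode (i + 1) (by omega) hiN χ hχ
  rw [Nat.add_sub_cancel] at hxi'
  have hd := (hasDerivAt_const χ (v₀ i * (x₀ (i + 1) - x₀ i))).div (hxi'.sub hxi) hℓ.ne'
  generalize pV f (v i χ) (v (i + 1) χ) - pV f (v (i - 1) χ) (v i χ) = D at hd ⊢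
  refine (hd.congr_deriv ?_).congr_of_eventuallyEq ?_
  · rw [hsol.mass i hi hiN χ hχ', Pi.sub_apply]
    field_simp
    ring
  · filter_upwards [isOpen_Ioo.mem_nhds hχ] with τ hτ
    exact hsol.mass i hi hiN τ (Ioo_subset_Ico_self hτ)

theorem tv_le_tv_zero (hsol : IsParticleSol f N x₀ v₀ t' x v) (hcont : Continuous (aF f))
    (hx₀ : ∀ i, 1 ≤ i → i < N → x₀ i < x₀ (i + 1)) (hv₀nn : ∀ i, 1 ≤ i → i < N → 0 ≤ v₀ i)
    {σ : ℝ} (hσ : σ ∈ Ico 0 t') :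
    ∑ i ∈ Finset.range N, |v (i + 1) σ - v i σ| ≤ ∑ i ∈ Finset.range N, |v (i + 1) 0 - v i 0| := by
  have hTV : ContinuousOn (fun τ => ∑ i ∈ Finset.range N, |v (i + 1) τ - v i τ|) (Icc 0 σ) :=
    (continuousOn_finsetSum _ fun i hi =>
      ((hsol.continuousOn_v hx₀ (Finset.mem_range.1 hi)).sub
        (hsol.continuousOn_v hx₀ (Finset.mem_range.1 hi).le)).abs).mono
      (Icc_subset_Ico_right hσ.2)
  refine (le_add_mul_of_frequently_slope_lt (C := 0) hσ.1 hTV fun χ hχ r hr => ?_).trans_eq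
    (by simp)
  have hχ' : χ ∈ Ioo 0 t' := ⟨hχ.1, hχ.2.trans hσ.2⟩
  set vd : ℕ → ℝ := fun i => -v i χ * (pV f (v i χ) (v (i + 1) χ) - pV f (v (i - 1) χ) (v i χ))
    / (x (i + 1) χ - x i χ)
  have hsign : ∀ i, ∃ ε : ℝ, i < N → (ε = 1 ∧ v i χ ≤ v (i + 1) χ ∨ ε = -1 ∧ v (i + 1) χ ≤ v i χ)
      ∧ HasDerivWithinAt (fun z => |v (i + 1) z - v i z|) (ε * (vd (i + 1) - vd i)) (Ici χ) χ := by
    intro i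
    by_cases hi : i < N
    · obtain ⟨ε, hε, hder⟩ := exists_sign_hasDerivWithinAt_abs
        ((hsol.hasDerivAt_v hx₀ hχ' hi).sub (hsol.hasDerivAt_v hx₀ hχ' hi.le))
      exact ⟨ε, fun _ => ⟨by simpa only [Pi.sub_apply, sub_nonneg, sub_nonpos] using hε, hder⟩⟩
    · exact ⟨0, fun h => absurd h hi⟩
  choose ε hε using hsign
  have hD := HasDerivWithinAt.fun_sum fun i hi => (hε i (Finset.mem_range.1 hi)).2
  have hD0 := sum_sign_mul_sub_nonpos hcont (v · χ) (fun i => x (i + 1) χ - x i χ) ε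
    (fun i hi => hsol.v_nonneg hx₀ hv₀nn (Ioo_subset_Ico_self hχ') hi) (hsol.vzero χ) (hsol.vN χ)
    (fun i h₁ h₂ => sub_pos.2 (hsol.lt_succ hx₀ (Ioo_subset_Ico_self hχ') h₁ h₂))
    (fun i hi => (hε i hi).1)
  have hslope := hasDerivWithinAt_iff_tendsto_slope.1 hD
  rw [Ici_sdiff_left] at hslope
  exact (hslope.eventually (gt_mem_nhds (hD0.trans_lt hr))).frequently

theorem integral_abs_stepFun_sub_le (hsol : IsParticleSol f N x₀ v₀ t' x v) (σ τ : ℝ) :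
    ∫ y, |stepFun N (x · τ) (v · τ) y - stepFun N (x · σ) (v · σ) y| ≤
      ∑ i ∈ Finset.range N, |v (i + 1) τ - v i τ| * |x (i + 1) τ - x (i + 1) σ|
        + ∑ i ∈ Finset.range N, |v (i + 1) τ - v (i + 1) σ| * |x (i + 1) σ - x (i + 2) σ| :=
  _root_.integral_abs_stepFun_sub_le _ _ _ _ (by simp [hsol.vzero]) (by simp [hsol.vN])

theorem tendsto_integral_abs_stepFun_sub (hsol : IsParticleSol f N x₀ v₀ t' x v)
    (hx₀ : ∀ i, 1 ≤ i → i < N → x₀ i < x₀ (i + 1)) {χ : ℝ} (hχ : χ ∈ Ico 0 t') :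
    Tendsto (fun z => ∫ y, |stepFun N (x · z) (v · z) y - stepFun N (x · χ) (v · χ) y|)
      (𝓝[Ico 0 t'] χ) (𝓝 0) := by
  have hv : ∀ i ∈ Finset.range N, ContinuousOn (v (i + 1)) (Ico 0 t') := fun i hi =>
    hsol.continuousOn_v hx₀ (Finset.mem_range.1 hi)
  have hB : ContinuousOn (fun z =>
      ∑ i ∈ Finset.range N, |v (i + 1) z - v i z| * |x (i + 1) z - x (i + 1) χ|
        + ∑ i ∈ Finset.range N, |v (i + 1) z - v (i + 1) χ| * |x (i + 1) χ - x (i + 2) χ|)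
      (Ico 0 t') :=
    (continuousOn_finsetSum _ fun i hi =>
      ((hv i hi).sub (hsol.continuousOn_v hx₀ (Finset.mem_range.1 hi).le)).abs.mul
        ((hsol.cont (i + 1) (by omega) (Finset.mem_range.1 hi)).sub continuousOn_const).abs).add
    (continuousOn_finsetSum _ fun i hi =>
      ((hv i hi).sub continuousOn_const).abs.mul continuousOn_const)
  refine squeeze_zero' (Eventually.of_forall fun z => integral_nonneg fun y => abs_nonneg _)
    (Eventually.of_forall fun z => hsol.integral_abs_stepFun_sub_le χ z) ?_
  simpa using (hB χ hχ).tendsto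

/-- As `z ↓ χ`, the bound of `integral_abs_stepFun_sub_le` divided by `z - χ` tends to
`∑ |Δv| |V| + ∑ |v'| ℓ`, and `|v'| ℓ = v |ΔV|` by mass conservation, so `sum_l1_rate_le` applies. -/
theorem eventually_integral_abs_stepFun_sub_lt (hsol : IsParticleSol f N x₀ v₀ t' x v)
    (hf : LipschitzWith K f) (hf0 : f 0 = 0) (hcont : Continuous (aF f))
    (hx₀ : ∀ i, 1 ≤ i → i < N → x₀ i < x₀ (i + 1)) (hv₀nn : ∀ i, 1 ≤ i → i < N → 0 ≤ v₀ i)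
    {χ : ℝ} (hχ : χ ∈ Ioo 0 t') {r : ℝ}
    (hr : 3 * K * ∑ i ∈ Finset.range N, |v (i + 1) 0 - v i 0| < r) :
    ∀ᶠ z in 𝓝[>] χ,
      ∫ y, |stepFun N (x · z) (v · z) y - stepFun N (x · χ) (v · χ) y| < r * (z - χ) := by
  have hχ' : χ ∈ Ico 0 t' := Ioo_subset_Ico_self hχ
  set vd : ℕ → ℝ := fun i => -v i χ * (pV f (v i χ) (v (i + 1) χ) - pV f (v (i - 1) χ) (v i χ))
    / (x (i + 1) χ - x i χ)
  set φ : ℝ → ℝ := fun z =>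
    ∑ i ∈ Finset.range N, |v (i + 1) z - v i z| * |slope (x (i + 1)) χ z|
      + ∑ i ∈ Finset.range N, |slope (v (i + 1)) χ z| * |x (i + 1) χ - x (i + 2) χ|
  set R := ∑ i ∈ Finset.range N, |v (i + 1) χ - v i χ| * |pV f (v i χ) (v (i + 1) χ)|
      + ∑ i ∈ Finset.range N, |vd (i + 1)| * |x (i + 1) χ - x (i + 2) χ|
  have hφ : Tendsto φ (𝓝[>] χ) (𝓝 R) := by
    refine (tendsto_finsetSum _ fun i hi => ?_).add (tendsto_finsetSum _ fun i hi => ?_)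
    · have hx := hsol.ode (i + 1) (by omega) (Finset.mem_range.1 hi) χ hχ
      rw [Nat.add_sub_cancel] at hx
      exact ((((hsol.hasDerivAt_v hx₀ hχ (Finset.mem_range.1 hi)).continuousAt.sub
        (hsol.hasDerivAt_v hx₀ hχ (Finset.mem_range.1 hi).le).continuousAt).abs).tendsto.mono_left
          nhdsWithin_le_nhds).mul
        ((hasDerivAt_iff_tendsto_slope.1 hx).mono_left (nhdsGT_le_nhdsNE χ)).abs
    · exact ((hasDerivAt_iff_tendsto_slope.1 (hsol.hasDerivAt_v hx₀ hχ
        (Finset.mem_range.1 hi))).mono_left (nhdsGT_le_nhdsNE χ)).abs.mul_const _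
  have hcell : ∀ i ∈ Finset.range N, |vd (i + 1)| * |x (i + 1) χ - x (i + 2) χ| ≤
      v (i + 1) χ * |pV f (v (i + 1) χ) (v (i + 2) χ) - pV f (v i χ) (v (i + 1) χ)| := by
    intro i hi
    have hb := hsol.v_nonneg hx₀ hv₀nn hχ' (Finset.mem_range.1 hi)
    simp only [vd, Nat.add_sub_cancel, abs_sub_comm (x (i + 1) χ)]
    rcases eq_or_ne (x (i + 1 + 1) χ - x (i + 1) χ) 0 with hℓ | hℓ
    · simp only [hℓ, abs_zero, mul_zero]; positivity
    · rw [abs_div, div_mul_cancel₀ _ (abs_ne_zero.2 hℓ), abs_mul, abs_neg, abs_of_nonneg hb]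
  have hR : R < r := by
    calc R ≤ ∑ i ∈ Finset.range N, (|v (i + 1) χ - v i χ| * |pV f (v i χ) (v (i + 1) χ)|
          + v (i + 1) χ * |pV f (v (i + 1) χ) (v (i + 2) χ) - pV f (v i χ) (v (i + 1) χ)|) := by
          rw [Finset.sum_add_distrib]; exact add_le_add le_rfl (Finset.sum_le_sum hcell)
      _ ≤ 3 * K * ∑ i ∈ Finset.range N, |v (i + 1) χ - v i χ| :=
          sum_l1_rate_le hf hf0 hcont (v · χ) (fun i hi => hsol.v_nonneg hx₀ hv₀nn hχ' hi)
            (hsol.vzero χ) (hsol.vN χ)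
      _ ≤ 3 * K * ∑ i ∈ Finset.range N, |v (i + 1) 0 - v i 0| := by
          exact mul_le_mul_of_nonneg_left (hsol.tv_le_tv_zero hcont hx₀ hv₀nn hχ') (by positivity)
      _ < r := hr
  filter_upwards [hφ.eventually (gt_mem_nhds hR), Ioo_mem_nhdsGT hχ.2] with z hz hzt
  have hpos : 0 < z - χ := sub_pos.2 hzt.1
  calc _ ≤ _ := hsol.integral_abs_stepFun_sub_le χ z
    _ = φ z * (z - χ) := by
        simp only [φ, slope_def_field, abs_div, abs_of_pos hpos, add_mul, Finset.sum_mul]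
        congr 1 <;> refine Finset.sum_congr rfl fun i _ => by field_simp
    _ < r * (z - χ) := mul_lt_mul_of_pos_right hz hpos

theorem integral_abs_stepFun_sub_le_mul (hsol : IsParticleSol f N x₀ v₀ t' x v)
    (hf : LipschitzWith K f) (hf0 : f 0 = 0) (hcont : Continuous (aF f))
    (hx₀ : ∀ i, 1 ≤ i → i < N → x₀ i < x₀ (i + 1)) (hv₀nn : ∀ i, 1 ≤ i → i < N → 0 ≤ v₀ i)
    {s t : ℝ} (hs : s ∈ Ico 0 t') (ht : t ∈ Ico 0 t') (hst : s ≤ t) :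
    ∫ y, |stepFun N (x · t) (v · t) y - stepFun N (x · s) (v · s) y| ≤
      3 * K * (∑ i ∈ Finset.range N, |v (i + 1) 0 - v i 0|) * (t - s) := by
  let γ : ℝ → ℝ →₁[volume] ℝ := fun σ =>
    (integrable_stepFun (x · σ) (v · σ) (hsol.vzero σ) (hsol.vN σ)).toL1 _
  have hdist : ∀ σ τ, dist (γ τ) (γ σ) =
      ∫ y, |stepFun N (x · τ) (v · τ) y - stepFun N (x · σ) (v · σ) y| := fun σ τ => by
    rw [dist_eq_norm, ← Integrable.toL1_sub, L1.norm_of_fun_eq_integral_norm]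
    simp [Real.norm_eq_abs]
  have hsub : Icc s t ⊆ Ico 0 t' := Icc_subset_Ico hs.1 ht.2
  have hγ : ContinuousOn γ (Icc s t) := fun χ hχ => by
    rw [ContinuousWithinAt, tendsto_iff_dist_tendsto_zero]
    simp_rw [hdist]
    exact (hsol.tendsto_integral_abs_stepFun_sub hx₀ (hsub hχ)).mono_left (nhdsWithin_mono _ hsub)
  have := dist_le_mul_of_eventually_dist_lt hst hγ fun χ hχ r hr => by
    simp_rw [hdist]
    exact hsol.eventually_integral_abs_stepFun_sub_lt hf hf0 hcont hx₀ hv₀nn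
      ⟨hs.1.trans_lt hχ.1, hχ.2.trans ht.2⟩ hr
  rwa [hdist] at this

theorem ae_eq_stepFun (hsol : IsParticleSol f N x₀ v₀ t' x v)
    (hx₀ : ∀ i, 1 ≤ i → i < N → x₀ i < x₀ (i + 1)) (hN : 1 ≤ N) {w : ℝ → ℝ → ℝ}
    (hwl : ∀ t ∈ Ico (0:ℝ) t', ∀ y, y < x 1 t → w y t = 0)
    (hwr : ∀ t ∈ Ico (0:ℝ) t', ∀ y, x N t < y → w y t = 0)
    (hwmid : ∀ t ∈ Ico (0:ℝ) t', ∀ i, 1 ≤ i → i < N →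
      ∀ y ∈ Ioo (x i t) (x (i+1) t), w y t = v i t)
    {σ : ℝ} (hσ : σ ∈ Ico 0 t') :
    (fun y => w y σ) =ᵐ[volume] stepFun N (x · σ) (v · σ) := by
  have hnull : volume (((Finset.Icc 1 N).image (x · σ) : Finset ℝ) : Set ℝ) = 0 :=
    (Finset.finite_toSet _).measure_zero _
  filter_upwards [measure_eq_zero_iff_ae_notMem.1 hnull] with y hy
  obtain ⟨j, hjN, hl, hr⟩ := exists_cell (x · σ) N fun k h₁ h₂ hk =>
    hy (Finset.mem_coe.2 (Finset.mem_image.2 ⟨k, Finset.mem_Icc.2 ⟨h₁, h₂⟩, hk⟩))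
  rw [stepFun_eq_of_mem_cell (hsol.monotoneOn hx₀ hσ) _ (hsol.vzero σ) hjN hl hr]
  rcases Nat.eq_zero_or_pos j with rfl | hj
  · rw [hsol.vzero, hwl σ hσ y (hr hN)]
  rcases hjN.eq_or_lt with rfl | hjN
  · rw [hsol.vN, hwr σ hσ y (hl hj)]
  · exact hwmid σ hσ j hj hjN y ⟨hl hj, hr hjN⟩

end IsParticleSol

/-- **Temporal L¹ modulus of continuity.**
`∫ |v(x,t) − v(x,s)| dx ≤ 4 [f]_Lip |v₀|_BV |t − s|` for all `s, t ∈ [0, tʹ)`. -/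
theorem temporal_L1_modulus
    (f : ℝ → ℝ) (K : ℝ≥0) (hf : LipschitzWith K f)
    (hf0 : f 0 = 0) (hfd : DifferentiableAt ℝ f 0)
    (N : ℕ) (hN : 2 ≤ N) (x₀ v₀ : ℕ → ℝ)
    (hx₀ : ∀ i, 1 ≤ i → i < N → x₀ i < x₀ (i+1))
    (hv₀nn : ∀ i, 1 ≤ i → i < N → 0 ≤ v₀ i)
    (hv₀0 : v₀ 0 = 0) (hv₀N : v₀ N = 0)
    (t' : ℝ) (ht' : 0 < t') (x v : ℕ → ℝ → ℝ)
    (hsol : IsParticleSol f N x₀ v₀ t' x v)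
    (w : ℝ → ℝ → ℝ)
    (hwl : ∀ t ∈ Set.Ico (0:ℝ) t', ∀ y, y < x 1 t → w y t = 0)
    (hwr : ∀ t ∈ Set.Ico (0:ℝ) t', ∀ y, x N t < y → w y t = 0)
    (hwmid : ∀ t ∈ Set.Ico (0:ℝ) t', ∀ i, 1 ≤ i → i < N →
      ∀ y ∈ Set.Ioo (x i t) (x (i+1) t), w y t = v i t)
    :
    ∀ s ∈ Set.Ico (0:ℝ) t', ∀ t ∈ Set.Ico (0:ℝ) t',
      ∫ y, |w y t - w y s| ≤
        4 * (K : ℝ) * (∑ i ∈ Finset.range N, |v₀ (i+1) - v₀ i|) * |t - s| := by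
  intro s hs t ht
  wlog hst : s ≤ t generalizing s t
  · simpa only [abs_sub_comm] using this t ht s hs (le_of_not_ge hst)
  have hTV0 : ∑ i ∈ Finset.range N, |v (i + 1) 0 - v i 0|
      = ∑ i ∈ Finset.range N, |v₀ (i + 1) - v₀ i| :=
    Finset.sum_congr rfl fun i hi => by
      rw [hsol.v_apply_zero hx₀ hv₀0 hv₀N ht' (Finset.mem_range.1 hi),
        hsol.v_apply_zero hx₀ hv₀0 hv₀N ht' (Finset.mem_range.1 hi).le]
  rw [abs_of_nonneg (sub_nonneg.2 hst)]
  calc ∫ y, |w y t - w y s|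
        = ∫ y, |stepFun N (x · t) (v · t) y - stepFun N (x · s) (v · s) y| := by
        refine integral_congr_ae ?_
        filter_upwards [hsol.ae_eq_stepFun hx₀ (by omega) hwl hwr hwmid ht,
          hsol.ae_eq_stepFun hx₀ (by omega) hwl hwr hwmid hs] with y h₁ h₂
        rw [h₁, h₂]
    _ ≤ 3 * K * (∑ i ∈ Finset.range N, |v₀ (i + 1) - v₀ i|) * (t - s) := by
        rw [← hTV0]
        exact hsol.integral_abs_stepFun_sub_le_mul hf hf0 (continuous_aF hf.continuous hf0 hfd)
          hx₀ hv₀nn hs ht hst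
    _ ≤ 4 * K * (∑ i ∈ Finset.range N, |v₀ (i + 1) - v₀ i|) * (t - s) := by
        gcongr
        norm_num
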